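/- arXiv:2008.02464 — 2 statements merged into one kernel-verified Lean document; each statement's English description precedes it below -/
import Mathlib

section
/- Let P be a regular Markov chain on state space [n] with stationary distribution π and Π = diag(π), let T ≥ 1, let α_1,…,α_T be real numbers with Σ_{r=1}^T |α_r| = 1, and let S and σ be the induced window state space and stationary distribution as above. Define f : S → ℝ^{n×n} by f(u_0,…,u_T) = (1/2)·( Σ_{r=1}^T (α_r/2)(e_{u_0} e_{u_r}ᵀ + e_{u_r} e_{u_0}ᵀ) − Σ_{r=1}^T (α_r/2)(ΠP^r + (ΠP^r)ᵀ) ). Then (1) Σ_{X∈S} σ_X f(X) = 0 (the zero n×n matrix), and (2) for every X ∈ S, f(X) is symmetric and ‖f(X)‖₂ ≤ 1. -/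
open scoped BigOperators Kronecker ComplexOrder
open Matrix

/-- A (row-stochastic) Markov chain on a finite state space: nonnegative entries, rows sum to 1. -/
def IsMarkov {S : Type*} [Fintype S] (P : Matrix S S ℝ) : Prop :=
  (∀ i j, 0 ≤ P i j) ∧ ∀ i, ∑ j, P i j = 1

/-- A Markov chain is regular if some positive power has all entries strictly positive. -/
def IsRegularMC {S : Type*} [Fintype S] [DecidableEq S] (P : Matrix S S ℝ) : Prop :=
  ∃ k : ℕ, 0 < k ∧ ∀ i j, 0 < (P ^ k) i j

/-- `π` is a stationary distribution of `P`: strictly positive entries, sums to 1, `πᵀ P = πᵀ`. -/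
def IsStationaryMC {S : Type*} [Fintype S] (P : Matrix S S ℝ) (π : S → ℝ) : Prop :=
  (∀ i, 0 < π i) ∧ (∑ i, π i = 1) ∧ ∀ j, ∑ i, π i * P i j = π j

/-- A probability vector. -/
def IsProbVec {S : Type*} [Fintype S] (φ : S → ℝ) : Prop :=
  (∀ i, 0 ≤ φ i) ∧ ∑ i, φ i = 1

/-- The `π`-norm of a real vector `φ`: `‖φ‖_π = sqrt (∑ i, φ i ^ 2 / π i)`. -/
noncomputable def piNormR {S : Type*} [Fintype S] (π φ : S → ℝ) : ℝ :=
  Real.sqrt (∑ i, φ i ^ 2 / π i)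

/-- The `π`-inner product `⟨x, y⟩_π = y* Π⁻¹ x` on `ℂ^S`. -/
noncomputable def piInner {S : Type*} [Fintype S] (π : S → ℝ) (x y : S → ℂ) : ℂ :=
  ∑ i, (starRingEnd ℂ) (y i) * x i / (π i : ℂ)

/-- The `π`-norm of a complex vector. -/
noncomputable def piNorm {S : Type*} [Fintype S] (π : S → ℝ) (x : S → ℂ) : ℝ :=
  Real.sqrt (∑ i, ‖x i‖ ^ 2 / π i)

/-- The spectral expansion `λ(P)`: the supremum of `‖Pᵀ x‖_π / ‖x‖_π` over nonzero `x`
with `⟨x, π⟩_π = 0`. -/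
noncomputable def specExp {S : Type*} [Fintype S] (P : Matrix S S ℝ) (π : S → ℝ) : ℝ :=
  sSup {r : ℝ | ∃ x : S → ℂ, x ≠ 0 ∧ piInner π x (fun i => (π i : ℂ)) = 0 ∧
    r = piNorm π ((P.map Complex.ofReal)ᵀ *ᵥ x) / piNorm π x}

/-- The spectral (operator 2-)norm of a matrix. -/
noncomputable def matSpectralNorm {𝕜 : Type*} [RCLike 𝕜] {m n : Type*} [Fintype m] [Fintype n]
    (A : Matrix m n 𝕜) : ℝ :=
  sSup {r : ℝ | ∃ x : n → 𝕜, x ≠ 0 ∧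
    r = Real.sqrt (∑ i, ‖(A *ᵥ x) i‖ ^ 2) / Real.sqrt (∑ j, ‖x j‖ ^ 2)}

/-- The probability that a `k`-step random walk on `P` started from `φ` follows the
trajectory `v`, i.e. `φ (v 1) * ∏ j, P (v j) (v (j+1))`. -/
noncomputable def walkWeight {S : Type*} [Fintype S] (P : Matrix S S ℝ) (φ : S → ℝ)
    {k : ℕ} (v : Fin k → S) : ℝ :=
  if h : 0 < k then
    φ (v ⟨0, h⟩) * ∏ j : Fin (k - 1),
      P (v ⟨(j : ℕ), by have := j.isLt; omega⟩) (v ⟨(j : ℕ) + 1, by have := j.isLt; omega⟩)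
  else 0

/-- The probability of an event `E` under a `k`-step random walk on `P` started from `φ`. -/
noncomputable def walkProb {S : Type*} [Fintype S] (P : Matrix S S ℝ) (φ : S → ℝ)
    {k : ℕ} (E : Set (Fin k → S)) : ℝ :=
  ∑ v : Fin k → S, E.indicator (fun u => walkWeight P φ u) v

/-- The state space `S` of the induced chain: all `(T+1)`-windows `(u_0, …, u_T)` on `[n]`
whose transitions all have positive probability under `P`. -/
def windowSpace {n : ℕ} (P : Matrix (Fin n) (Fin n) ℝ) (T : ℕ) : Type :=
  {u : Fin (T + 1) → Fin n // 0 < ∏ i : Fin T, P (u i.castSucc) (u i.succ)}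

instance {n : ℕ} (P : Matrix (Fin n) (Fin n) ℝ) (T : ℕ) : Finite (windowSpace P T) :=
  inferInstanceAs (Finite {u : Fin (T + 1) → Fin n //
    0 < ∏ i : Fin T, P (u i.castSucc) (u i.succ)})

noncomputable instance {n : ℕ} (P : Matrix (Fin n) (Fin n) ℝ) (T : ℕ) :
    Fintype (windowSpace P T) := Fintype.ofFinite _

noncomputable instance {n : ℕ} (P : Matrix (Fin n) (Fin n) ℝ) (T : ℕ) :
    DecidableEq (windowSpace P T) := Classical.decEq _

/-- The induced Markov chain `Q` on windows:
`Q_{(u_0,…,u_T),(w_0,…,w_T)} = P_{u_T, w_T}` if `(u_1,…,u_T) = (w_0,…,w_{T-1})`, else `0`. -/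
noncomputable def inducedQ {n : ℕ} (P : Matrix (Fin n) (Fin n) ℝ) (T : ℕ) :
    Matrix (windowSpace P T) (windowSpace P T) ℝ :=
  Matrix.of fun u w =>
    if ∀ i : Fin T, u.1 i.succ = w.1 i.castSucc then
      P (u.1 (Fin.last T)) (w.1 (Fin.last T))
    else 0

/-- The induced stationary distribution:
`σ_{(u_0,…,u_T)} = π_{u_0} P_{u_0,u_1} ⋯ P_{u_{T-1},u_T}`. -/
noncomputable def inducedSigma {n : ℕ} (P : Matrix (Fin n) (Fin n) ℝ) (π : Fin n → ℝ)
    (T : ℕ) : windowSpace P T → ℝ :=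
  fun u => π (u.1 0) * ∏ i : Fin T, P (u.1 i.castSucc) (u.1 i.succ)

/-!
Summing `σ` over windows is summing `π u₀ · ∏ P` over all paths (paths of weight zero contribute
nothing), and such a path sum with `u₀ = a` and `u_k = b` pinned is `(Π P^k)_{ab}`, since the steps
after `k` sum out by stochasticity. Hence `∑_X σ_X e_{u₀} e_{u_k}ᵀ = Π P^k`, which gives (1).

For (2), `e_u e_wᵀ` and `Π P^k` have nonnegative entries with row and column sums at most `1`
(the column sums of `Π P^k` are `π_j` by stationarity), so the Schur test bounds their spectral
norms by `1`; the triangle inequality and `∑ |α_r| = 1` then give `‖f X‖₂ ≤ 1`.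
-/

namespace Matrix

open scoped Matrix.Norms.L2Operator

variable {m n : Type*} [Fintype m] [Fintype n] [DecidableEq n]

/-- The **Schur test**. -/
lemma l2_opNorm_le_sqrt_of_nonneg {A : Matrix m n ℝ} {r c : ℝ} (hr : 0 ≤ r)
    (hA : ∀ i j, 0 ≤ A i j) (hrow : ∀ i, ∑ j, A i j ≤ r) (hcol : ∀ j, ∑ i, A i j ≤ c) :
    ‖A‖ ≤ √(r * c) := by
  refine ContinuousLinearMap.opNorm_le_bound _ (Real.sqrt_nonneg _) fun x => ?_
  simp only [EuclideanSpace.norm_eq, Real.norm_eq_abs, sq_abs]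
  rw [← Real.sqrt_mul' _ (by positivity)]
  gcongr
  have hrow_sq (i : m) : (A *ᵥ x) i ^ 2 ≤ r * ∑ j, A i j * x j ^ 2 :=
    calc (A *ᵥ x) i ^ 2 ≤ (∑ j, A i j) * ∑ j, A i j * x j ^ 2 :=
          Finset.sum_sq_le_sum_mul_sum_of_sq_le_mul _ (fun j _ => hA i j)
            (fun j _ => mul_nonneg (hA i j) (sq_nonneg _)) fun j _ => le_of_eq (by ring)
      _ ≤ r * ∑ j, A i j * x j ^ 2 := by
          gcongr
          · exact Finset.sum_nonneg fun j _ => mul_nonneg (hA i j) (sq_nonneg _)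
          · exact hrow i
  calc ∑ i, (A *ᵥ x) i ^ 2 ≤ ∑ i, r * ∑ j, A i j * x j ^ 2 :=
        Finset.sum_le_sum fun i _ => hrow_sq i
    _ = r * ∑ j, (∑ i, A i j) * x j ^ 2 := by
        rw [← Finset.mul_sum, Finset.sum_comm]
        simp only [Finset.sum_mul]
    _ ≤ r * ∑ j, c * x j ^ 2 := by gcongr with j; exact hcol j
    _ = r * c * ∑ j, x j ^ 2 := by rw [← Finset.mul_sum, mul_assoc]

lemma l2_opNorm_transpose [DecidableEq m] (A : Matrix m n ℝ) : ‖Aᵀ‖ = ‖A‖ := by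
  rw [← conjTranspose_eq_transpose_of_trivial, l2_opNorm_conjTranspose]

lemma matSpectralNorm_le_l2_opNorm (A : Matrix m n ℝ) : matSpectralNorm A ≤ ‖A‖ := by
  refine Real.sSup_le ?_ (norm_nonneg A)
  rintro s ⟨x, hx, rfl⟩
  have hx' : 0 < ‖WithLp.toLp 2 x‖ := norm_pos_iff.mpr (by simpa using hx)
  rw [← EuclideanSpace.norm_eq (WithLp.toLp 2 x),
    ← EuclideanSpace.norm_eq (WithLp.toLp 2 (A *ᵥ x)), div_le_iff₀ hx']
  exact l2_opNorm_mulVec A (WithLp.toLp 2 x)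

end Matrix

lemma norm_sum_half_smul_add_le {ι E : Type*} [SeminormedAddCommGroup E] [NormedSpace ℝ E]
    (s : Finset ι) (a : ι → ℝ) {M N : ι → E} (hM : ∀ i, ‖M i‖ ≤ 1) (hN : ∀ i, ‖N i‖ ≤ 1) :
    ‖∑ i ∈ s, (a i / 2) • (M i + N i)‖ ≤ ∑ i ∈ s, |a i| := by
  refine norm_sum_le_of_le s fun i _ => ?_
  rw [norm_smul, Real.norm_eq_abs, abs_div, abs_two]
  calc |a i| / 2 * ‖M i + N i‖ ≤ |a i| / 2 * 2 := by
        gcongr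
        linarith [norm_add_le (M i) (N i), hM i, hN i]
    _ = |a i| := by ring

section Paths

variable {S R : Type*} [CommSemiring R]

def pathWeight (P : Matrix S S R) {m : ℕ} (u : Fin (m + 1) → S) : R :=
  ∏ i : Fin m, P (u i.castSucc) (u i.succ)

lemma pathWeight_snoc (P : Matrix S S R) {m : ℕ} (v : Fin (m + 1) → S) (c : S) :
    pathWeight P (Fin.snoc v c : Fin (m + 2) → S) = pathWeight P v * P (v (Fin.last m)) c := by
  simp only [pathWeight, Fin.prod_univ_castSucc, Fin.succ_castSucc, Fin.snoc_castSucc,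
    Fin.succ_last, Fin.snoc_last]

variable [Fintype S] [DecidableEq S]

lemma Matrix.single_one_mul_eq_sum (a b : S) (P : Matrix S S R) :
    single a b (1 : R) * P = ∑ c, P b c • single a c 1 := by
  ext i j
  by_cases h : a = i <;> simp [h, Matrix.single, Matrix.sum_apply, mul_apply]

lemma sum_pathWeight_smul_single {P : Matrix S S R} (hP : ∀ i, ∑ j, P i j = 1) :
    ∀ {m : ℕ} (k : Fin (m + 1)),
      ∑ u : Fin (m + 1) → S, pathWeight P u • single (u 0) (u k) (1 : R) = P ^ (k : ℕ)
  | 0, k => by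
      rw [Fin.fin_one_eq_zero k, ← (Equiv.funUnique (Fin 1) S).symm.sum_comp]
      simp [pathWeight, sum_single_one]
  | m + 1, k => by
      have hsnoc (c : S) (v : Fin (m + 1) → S) :
          Fin.snocEquiv (fun _ => S) (c, v) = Fin.snoc v c := rfl
      have hzero (c : S) (v : Fin (m + 1) → S) : (Fin.snoc v c : Fin (m + 2) → S) 0 = v 0 :=
        Fin.snoc_castSucc (i := 0) ..
      rw [← (Fin.snocEquiv fun _ => S).sum_comp, Fintype.sum_prod_type, Finset.sum_comm]
      simp only [hsnoc, hzero, pathWeight_snoc]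
      induction k using Fin.lastCases with
      | last =>
        have ih := sum_pathWeight_smul_single hP (Fin.last m)
        rw [Fin.val_last] at ih
        rw [Fin.val_last, pow_succ, ← ih, Finset.sum_mul]
        simp only [Fin.snoc_last, smul_mul_assoc, single_one_mul_eq_sum, Finset.smul_sum,
          smul_smul]
      | cast k =>
        rw [Fin.val_castSucc, ← sum_pathWeight_smul_single hP k]
        simp only [Fin.snoc_castSucc, ← Finset.sum_smul, ← Finset.mul_sum, hP, mul_one]

end Paths

section Stochastic

variable {S : Type*} [Fintype S] {P : Matrix S S ℝ} {π : S → ℝ}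

lemma IsStationaryMC.apply_le_one (hπ : IsStationaryMC P π) (i : S) : π i ≤ 1 :=
  hπ.2.1 ▸ Finset.single_le_sum (fun j _ => (hπ.1 j).le) (Finset.mem_univ i)

variable [DecidableEq S]

lemma IsMarkov.mem_rowStochastic (hP : IsMarkov P) : P ∈ rowStochastic ℝ S :=
  mem_rowStochastic_iff_sum.mpr hP

lemma IsStationaryMC.vecMul_pow (hπ : IsStationaryMC P π) (k : ℕ) : π ᵥ* P ^ k = π := by
  induction k with
  | zero => simp
  | succ k ih =>
    rw [pow_succ, ← vecMul_vecMul, ih]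
    exact funext hπ.2.2

open scoped Matrix.Norms.L2Operator

lemma l2_opNorm_diagonal_mul_pow_le_one (hP : IsMarkov P) (hπ : IsStationaryMC P π) (k : ℕ) :
    ‖diagonal π * P ^ k‖ ≤ 1 := by
  have hPk := pow_mem hP.mem_rowStochastic k
  have hcol (j : S) : ∑ i, π i * (P ^ k) i j = π j := congrFun (hπ.vecMul_pow k) j
  simpa using l2_opNorm_le_sqrt_of_nonneg (r := 1) (c := 1) zero_le_one
    (fun i j => by
      rw [diagonal_mul]
      exact mul_nonneg (hπ.1 i).le (nonneg_of_mem_rowStochastic hPk))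
    (fun i => by
      simp_rw [diagonal_mul, ← Finset.mul_sum, sum_row_of_mem_rowStochastic hPk, mul_one]
      exact hπ.apply_le_one i)
    (fun j => by
      simp_rw [diagonal_mul, hcol]
      exact hπ.apply_le_one j)

lemma l2_opNorm_single_one_le_one (a b : S) : ‖single a b (1 : ℝ)‖ ≤ 1 := by
  simpa using l2_opNorm_le_sqrt_of_nonneg (A := single a b (1 : ℝ)) (r := 1) (c := 1)
    zero_le_one
    (fun i j => by by_cases h : a = i ∧ b = j <;> simp [single, h])
    (fun i => by by_cases h : a = i <;> simp [single, h])
    (fun j => by by_cases h : b = j <;> simp [single, h])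

end Stochastic

section Window

variable {n T : ℕ} {P : Matrix (Fin n) (Fin n) ℝ} {π : Fin n → ℝ}

lemma sum_windowSpace_pathWeight_smul {M : Type*} [AddCommMonoid M] [Module ℝ M]
    (hP : ∀ i j, 0 ≤ P i j) (g : (Fin (T + 1) → Fin n) → M) :
    ∑ X : windowSpace P T, pathWeight P X.1 • g X.1 = ∑ u, pathWeight P u • g u := by
  classical
  refine (Finset.sum_subtype (.filter (0 < pathWeight P ·) .univ)
    (fun _ => by rw [Finset.mem_filter]; simp [pathWeight])
    (fun u => pathWeight P u • g u)).symm.trans (Finset.sum_filter_of_ne fun u _ hu => ?_)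
  exact (Finset.prod_nonneg fun i _ => hP _ _).lt_of_ne' (left_ne_zero_of_smul hu)

lemma sum_inducedSigma_smul_single (hP : IsMarkov P) (k : Fin (T + 1)) :
    ∑ X : windowSpace P T, inducedSigma P π T X • single (X.1 0) (X.1 k) (1 : ℝ) =
      diagonal π * P ^ (k : ℕ) := by
  have hσ (X : windowSpace P T) : inducedSigma P π T X • single (X.1 0) (X.1 k) (1 : ℝ) =
      diagonal π * pathWeight P X.1 • single (X.1 0) (X.1 k) (1 : ℝ) := by
    ext i j
    by_cases h : X.1 0 = i <;> simp [h, inducedSigma, pathWeight, single, mul_comm]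
  simp_rw [hσ, ← Finset.mul_sum]
  rw [sum_windowSpace_pathWeight_smul hP.1 (fun u => single (u 0) (u k) (1 : ℝ)),
    sum_pathWeight_smul_single hP.2]

lemma sum_inducedSigma_smul_single_add_single (hP : IsMarkov P) (k : Fin (T + 1)) :
    ∑ X : windowSpace P T, inducedSigma P π T X •
        (single (X.1 0) (X.1 k) (1 : ℝ) + single (X.1 k) (X.1 0) 1) =
      diagonal π * P ^ (k : ℕ) + (diagonal π * P ^ (k : ℕ))ᵀ := by
  have hswap (X : windowSpace P T) :
      inducedSigma P π T X • single (X.1 k) (X.1 0) (1 : ℝ) =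
        (inducedSigma P π T X • single (X.1 0) (X.1 k) (1 : ℝ))ᵀ := by
    rw [transpose_smul, transpose_single]
  simp_rw [smul_add, Finset.sum_add_distrib, hswap]
  rw [← transpose_sum, sum_inducedSigma_smul_single hP]

lemma sum_inducedSigma (hP : IsMarkov P) (hπ : ∑ i, π i = 1) :
    ∑ X : windowSpace P T, inducedSigma P π T X = 1 := by
  simpa [trace_sum, hπ] using
    congrArg trace (sum_inducedSigma_smul_single (π := π) (T := T) hP 0)

end Window

theorem stmt_8_general {n T : ℕ}
    (P : Matrix (Fin n) (Fin n) ℝ) (π : Fin n → ℝ)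
    (hP : IsMarkov P) (hπ : IsStationaryMC P π)
    (α : Fin T → ℝ) (hα : ∑ r, |α r| = 1)
    (f : windowSpace P T → Matrix (Fin n) (Fin n) ℝ)
    (hf : ∀ X : windowSpace P T, f X =
      (1 / 2 : ℝ) •
        ((∑ r : Fin T, (α r / 2) •
            (Matrix.single (X.1 0) (X.1 r.succ) (1 : ℝ) +
             Matrix.single (X.1 r.succ) (X.1 0) (1 : ℝ))) -
         ∑ r : Fin T, (α r / 2) •
            (Matrix.diagonal π * P ^ ((r : ℕ) + 1) +
             (Matrix.diagonal π * P ^ ((r : ℕ) + 1))ᵀ))) :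
    (∑ X, inducedSigma P π T X • f X = 0) ∧
      ∀ X, (f X)ᵀ = f X ∧ matSpectralNorm (f X) ≤ 1 := by
  refine ⟨?_, fun X => ⟨?_, ?_⟩⟩
  · have hmean : ∑ X, inducedSigma P π T X • ∑ r : Fin T, (α r / 2) •
        (single (X.1 0) (X.1 r.succ) (1 : ℝ) + single (X.1 r.succ) (X.1 0) 1) =
        ∑ r : Fin T, (α r / 2) • (diagonal π * P ^ ((r : ℕ) + 1) +
          (diagonal π * P ^ ((r : ℕ) + 1))ᵀ) := by
      simp_rw [Finset.smul_sum, smul_comm (inducedSigma P π T _) (α _ / 2)]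
      rw [Finset.sum_comm]
      simp_rw [← Finset.smul_sum, sum_inducedSigma_smul_single_add_single hP, Fin.val_succ]
    simp_rw [hf, smul_comm (inducedSigma P π T _) (1 / 2 : ℝ), ← Finset.smul_sum, smul_sub,
      Finset.sum_sub_distrib, hmean, ← Finset.sum_smul, sum_inducedSigma hP hπ.2.1, one_smul,
      sub_self, smul_zero]
  · simp [hf, transpose_sum, add_comm]
  · open scoped Matrix.Norms.L2Operator in
    have hA := norm_sum_half_smul_add_le Finset.univ α
      (fun r => l2_opNorm_single_one_le_one (X.1 0) (X.1 r.succ))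
      (fun r => l2_opNorm_single_one_le_one (X.1 r.succ) (X.1 0))
    have hB := norm_sum_half_smul_add_le Finset.univ α
      (fun r => l2_opNorm_diagonal_mul_pow_le_one hP hπ ((r : ℕ) + 1))
      (fun r => (l2_opNorm_transpose _).trans_le
        (l2_opNorm_diagonal_mul_pow_le_one hP hπ ((r : ℕ) + 1)))
    refine (matSpectralNorm_le_l2_opNorm (f X)).trans ?_
    rw [hf, norm_smul, Real.norm_eq_abs, abs_of_pos one_half_pos]
    linarith [(norm_sub_le _ _).trans (add_le_add hA hB)]

theorem stmt_8 {n T : ℕ} (hT : 1 ≤ T)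
    (P : Matrix (Fin n) (Fin n) ℝ) (π : Fin n → ℝ)
    (hP : IsMarkov P) (hreg : IsRegularMC P) (hπ : IsStationaryMC P π)
    (α : Fin T → ℝ) (hα : ∑ r, |α r| = 1)
    (f : windowSpace P T → Matrix (Fin n) (Fin n) ℝ)
    (hf : ∀ X : windowSpace P T, f X =
      (1 / 2 : ℝ) •
        ((∑ r : Fin T, (α r / 2) •
            (Matrix.single (X.1 0) (X.1 r.succ) (1 : ℝ) +
             Matrix.single (X.1 r.succ) (X.1 0) (1 : ℝ))) -
         ∑ r : Fin T, (α r / 2) •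
            (Matrix.diagonal π * P ^ ((r : ℕ) + 1) +
             (Matrix.diagonal π * P ^ ((r : ℕ) + 1))ᵀ))) :
    (∑ X, inducedSigma P π T X • f X = 0) ∧
      ∀ X, (f X)ᵀ = f X ∧ matSpectralNorm (f X) ≤ 1 :=
  stmt_8_general P π hP hπ α hα f hf
end

section
/- Let P be a regular Markov chain on state space [N] with stationary distribution π and spectral expansion λ, let m ≥ 1, let P̃ := P ⊗ I_m, and let U = {π ⊗ w : w ∈ ℂ^m} ⊆ ℂ^{Nm}. Then: (1) for every y ∈ U, P̃ᵀy = y; and (2) for every y ∈ ℂ^{Nm} that is π-orthogonal to U, the vector P̃ᵀy is also π-orthogonal to U and satisfies ‖P̃ᵀy‖_π ≤ λ‖y‖_π. -/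
open scoped BigOperators Kronecker ComplexOrder
open Matrix

/-- The spectral (operator 2-)norm of a matrix. -/
noncomputable def spectralNormMat {𝕜 : Type*} [RCLike 𝕜] {m n : Type*} [Fintype m] [Fintype n]
    (A : Matrix m n 𝕜) : ℝ :=
  sSup {r : ℝ | ∃ x : n → 𝕜, x ≠ 0 ∧
    r = Real.sqrt (∑ i, ‖(A *ᵥ x) i‖ ^ 2) / Real.sqrt (∑ j, ‖x j‖ ^ 2)}

/-- The `π`-inner product `⟨x, y⟩_π = y* (Π⁻¹ ⊗ I_m) x` on `ℂ^{N m}`. -/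
noncomputable def piInnerKron {N m : ℕ} (π : Fin N → ℝ) (x y : Fin N × Fin m → ℂ) : ℂ :=
  ∑ p, (starRingEnd ℂ) (y p) * x p / (π p.1 : ℂ)

/-- The `π`-norm on `ℂ^{N m}`. -/
noncomputable def piNormKron {N m : ℕ} (π : Fin N → ℝ) (x : Fin N × Fin m → ℂ) : ℝ :=
  Real.sqrt (∑ p, ‖x p‖ ^ 2 / π p.1)

/-- Membership in the subspace `U = {π ⊗ w : w ∈ ℂ^m}`. -/
def memU {N m : ℕ} (π : Fin N → ℝ) (x : Fin N × Fin m → ℂ) : Prop :=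
  ∃ w : Fin m → ℂ, ∀ p, x p = (π p.1 : ℂ) * w p.2

/-- `π`-orthogonality to the subspace `U = {π ⊗ w : w ∈ ℂ^m}`. -/
noncomputable def perpU {N m : ℕ} (π : Fin N → ℝ) (x : Fin N × Fin m → ℂ) : Prop :=
  ∀ w : Fin m → ℂ, piInnerKron π x (fun p => (π p.1 : ℂ) * w p.2) = 0

/-!
`P̃ᵀ` acts on each slice `y (·, a)` as `Pᵀ`, the elements of `U` are the vectors whose slices
are multiples of `π`, and `π`-orthogonality to `U` says that every slice sums to zero. So both
claims reduce slice by slice to stationarity, to the row sums of `P`, and to the definition of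
`λ(P)`; the supremum defining `λ(P)` is finite because `Pᵀ` is a contraction for `‖·‖_π`.
-/

section PiNorm

variable {S : Type*} [Fintype S]

lemma piNorm_sq {π : S → ℝ} (hπ : ∀ i, 0 ≤ π i) (x : S → ℂ) :
    piNorm π x ^ 2 = ∑ i, ‖x i‖ ^ 2 / π i :=
  Real.sq_sqrt <| Finset.sum_nonneg fun i _ => div_nonneg (sq_nonneg _) (hπ i)

lemma piInner_ofReal_right {π : S → ℝ} (hπ : ∀ i, π i ≠ 0) (x : S → ℂ) :
    piInner π x (fun i => (π i : ℂ)) = ∑ i, x i := by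
  refine Finset.sum_congr rfl fun i _ => ?_
  rw [Complex.conj_ofReal, mul_div_cancel_left₀ _ (Complex.ofReal_ne_zero.mpr (hπ i))]

lemma transpose_mulVec_apply {R : Type*} [CommSemiring R] (A : Matrix S S R) (x : S → R)
    (i : S) : (Aᵀ *ᵥ x) i = ∑ j, A j i * x j := rfl

lemma sum_map_transpose_mulVec {P : Matrix S S ℝ} (hrow : ∀ i, ∑ j, P i j = 1) (x : S → ℂ) :
    ∑ i, ((P.map Complex.ofReal)ᵀ *ᵥ x) i = ∑ i, x i := by
  simp only [transpose_mulVec_apply, map_apply]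
  rw [Finset.sum_comm]
  refine Finset.sum_congr rfl fun j _ => ?_
  rw [← Finset.sum_mul, ← Complex.ofReal_sum, hrow, Complex.ofReal_one, one_mul]

lemma IsStationaryMC.map_transpose_mulVec {P : Matrix S S ℝ} {π : S → ℝ}
    (hπ : IsStationaryMC P π) :
    (P.map Complex.ofReal)ᵀ *ᵥ (fun i => (π i : ℂ)) = fun i => (π i : ℂ) := by
  ext i
  simp only [transpose_mulVec_apply, map_apply]
  rw [← hπ.2.2 i]
  push_cast
  exact Finset.sum_congr rfl fun j _ => mul_comm _ _

/-- Cauchy–Schwarz against the weights `P j i * π j`, which sum to `π i` by stationarity. -/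
lemma IsStationaryMC.piNorm_map_transpose_mulVec_le {P : Matrix S S ℝ} {π : S → ℝ}
    (hP : IsMarkov P) (hπ : IsStationaryMC P π) (x : S → ℂ) :
    piNorm π ((P.map Complex.ofReal)ᵀ *ᵥ x) ≤ piNorm π x := by
  have hpos := hπ.1
  have hentry : ∀ i, ‖((P.map Complex.ofReal)ᵀ *ᵥ x) i‖ ^ 2 / π i ≤
      ∑ j, P j i * (‖x j‖ ^ 2 / π j) := by
    intro i
    have hnorm : ‖((P.map Complex.ofReal)ᵀ *ᵥ x) i‖ ≤ ∑ j, P j i * ‖x j‖ := by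
      rw [transpose_mulVec_apply]
      refine (norm_sum_le _ _).trans (le_of_eq (Finset.sum_congr rfl fun j _ => ?_))
      rw [map_apply, norm_mul, Complex.norm_real, Real.norm_of_nonneg (hP.1 j i)]
    have hcs : (∑ j, P j i * ‖x j‖) ^ 2 ≤ (∑ j, P j i * π j) * ∑ j, P j i * (‖x j‖ ^ 2 / π j) :=
      Finset.sum_sq_le_sum_mul_sum_of_sq_le_mul _
        (fun j _ => mul_nonneg (hP.1 j i) (hpos j).le)
        (fun j _ => mul_nonneg (hP.1 j i) (div_nonneg (sq_nonneg _) (hpos j).le))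
        (fun j _ => le_of_eq (by field_simp [(hpos j).ne']))
    have hstat : ∑ j, P j i * π j = π i := by
      rw [← hπ.2.2 i]; exact Finset.sum_congr rfl fun j _ => mul_comm _ _
    rw [div_le_iff₀ (hpos i), mul_comm, ← hstat]
    exact (pow_le_pow_left₀ (norm_nonneg _) hnorm 2).trans hcs
  have hsum : ∑ i, ∑ j, P j i * (‖x j‖ ^ 2 / π j) = ∑ j, ‖x j‖ ^ 2 / π j := by
    rw [Finset.sum_comm]
    refine Finset.sum_congr rfl fun j _ => ?_
    rw [← Finset.sum_mul, hP.2 j, one_mul]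
  exact Real.sqrt_le_sqrt ((Finset.sum_le_sum fun i _ => hentry i).trans hsum.le)

lemma specExp_nonneg (P : Matrix S S ℝ) (π : S → ℝ) : 0 ≤ specExp P π :=
  Real.sSup_nonneg <| by
    rintro r ⟨x, -, -, rfl⟩
    exact div_nonneg (Real.sqrt_nonneg _) (Real.sqrt_nonneg _)

lemma piNorm_map_transpose_mulVec_le_specExp {P : Matrix S S ℝ} {π : S → ℝ}
    (hP : IsMarkov P) (hπ : IsStationaryMC P π) {x : S → ℂ} (hx : ∑ i, x i = 0) :
    piNorm π ((P.map Complex.ofReal)ᵀ *ᵥ x) ≤ specExp P π * piNorm π x := by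
  rcases eq_or_ne x 0 with rfl | hx0
  · simp [piNorm]
  have hnorm_pos : 0 < piNorm π x := by
    obtain ⟨i, hi⟩ := Function.ne_iff.mp hx0
    refine Real.sqrt_pos.mpr <| Finset.sum_pos'
      (fun j _ => div_nonneg (sq_nonneg _) (hπ.1 j).le) ⟨i, Finset.mem_univ i, ?_⟩
    exact div_pos (pow_pos (norm_pos_iff.mpr hi) 2) (hπ.1 i)
  have hbdd : BddAbove {r : ℝ | ∃ x : S → ℂ, x ≠ 0 ∧ piInner π x (fun i => (π i : ℂ)) = 0 ∧
      r = piNorm π ((P.map Complex.ofReal)ᵀ *ᵥ x) / piNorm π x} := by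
    refine ⟨1, ?_⟩
    rintro r ⟨y, -, -, rfl⟩
    exact div_le_one_of_le₀ (hπ.piNorm_map_transpose_mulVec_le hP y) (Real.sqrt_nonneg _)
  rw [← div_le_iff₀ hnorm_pos]
  exact le_csSup hbdd ⟨x, hx0, by rwa [piInner_ofReal_right fun i => (hπ.1 i).ne'], rfl⟩

end PiNorm

lemma kronecker_one_transpose_mulVec_apply {R n m : Type*} [CommSemiring R] [Fintype n]
    [Fintype m] [DecidableEq m] (A : Matrix n n R) (y : n × m → R) (i : n) (a : m) :
    ((A ⊗ₖ (1 : Matrix m m R))ᵀ *ᵥ y) (i, a) = (Aᵀ *ᵥ fun j => y (j, a)) i := by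
  simp [mulVec, dotProduct, Fintype.sum_prod_type, one_apply]

section Kron

variable {N m : ℕ} {π : Fin N → ℝ}

lemma piInnerKron_ofReal_mul (hπ : ∀ i, π i ≠ 0) (x : Fin N × Fin m → ℂ) (w : Fin m → ℂ) :
    piInnerKron π x (fun p => (π p.1 : ℂ) * w p.2) =
      ∑ a, (starRingEnd ℂ) (w a) * ∑ j, x (j, a) := by
  have hterm : ∀ p : Fin N × Fin m,
      (starRingEnd ℂ) ((π p.1 : ℂ) * w p.2) * x p / (π p.1 : ℂ) =
        (starRingEnd ℂ) (w p.2) * x p := by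
    intro p
    rw [map_mul, Complex.conj_ofReal, mul_assoc,
      mul_div_cancel_left₀ _ (Complex.ofReal_ne_zero.mpr (hπ p.1))]
  simp only [piInnerKron, hterm, Fintype.sum_prod_type_right, Finset.mul_sum]

lemma perpU_iff (hπ : ∀ i, π i ≠ 0) {y : Fin N × Fin m → ℂ} :
    perpU π y ↔ ∀ a, ∑ j, y (j, a) = 0 := by
  simp only [perpU, piInnerKron_ofReal_mul hπ]
  refine ⟨fun h a => ?_, fun h w => by simp [h]⟩
  simpa [Pi.single_apply] using h (Pi.single a 1)

lemma piNormKron_eq_sqrt_sum_piNorm_sq (hπ : ∀ i, 0 ≤ π i) (y : Fin N × Fin m → ℂ) :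
    piNormKron π y = √(∑ a, piNorm π (fun j => y (j, a)) ^ 2) := by
  simp only [piNormKron, piNorm_sq hπ, Fintype.sum_prod_type_right]

end Kron

theorem stmt_11_general {N m : ℕ}
    (P : Matrix (Fin N) (Fin N) ℝ) (π : Fin N → ℝ)
    (hP : IsMarkov P) (hπ : IsStationaryMC P π) :
    (∀ y : Fin N × Fin m → ℂ, memU π y →
      ((P.map Complex.ofReal) ⊗ₖ (1 : Matrix (Fin m) (Fin m) ℂ))ᵀ *ᵥ y = y) ∧
    (∀ y : Fin N × Fin m → ℂ, perpU π y →
      perpU π (((P.map Complex.ofReal) ⊗ₖ (1 : Matrix (Fin m) (Fin m) ℂ))ᵀ *ᵥ y) ∧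
      piNormKron π (((P.map Complex.ofReal) ⊗ₖ (1 : Matrix (Fin m) (Fin m) ℂ))ᵀ *ᵥ y) ≤
        specExp P π * piNormKron π y) := by
  have hπ0 : ∀ i, π i ≠ 0 := fun i => (hπ.1 i).ne'
  refine ⟨fun y ⟨w, hw⟩ => ?_, fun y hy => ⟨?_, ?_⟩⟩
  · ext ⟨i, a⟩
    have hslice : (fun j => y (j, a)) = w a • fun j => (π j : ℂ) := by
      ext j; simp [hw, mul_comm]
    rw [kronecker_one_transpose_mulVec_apply, hslice, mulVec_smul, hπ.map_transpose_mulVec, hw]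
    simp [mul_comm]
  · rw [perpU_iff hπ0] at hy ⊢
    intro a
    simp only [kronecker_one_transpose_mulVec_apply, sum_map_transpose_mulVec hP.2, hy a]
  · rw [perpU_iff hπ0] at hy
    have hπnn : ∀ i, 0 ≤ π i := fun i => (hπ.1 i).le
    rw [piNormKron_eq_sqrt_sum_piNorm_sq hπnn, piNormKron_eq_sqrt_sum_piNorm_sq hπnn,
      ← Real.sqrt_sq (specExp_nonneg P π), ← Real.sqrt_mul (sq_nonneg _), Finset.mul_sum]
    refine Real.sqrt_le_sqrt (Finset.sum_le_sum fun a _ => ?_)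
    simp only [kronecker_one_transpose_mulVec_apply, ← mul_pow]
    exact pow_le_pow_left₀ (Real.sqrt_nonneg _)
      (piNorm_map_transpose_mulVec_le_specExp hP hπ (hy a)) 2

theorem stmt_11 {N m : ℕ} (hm : 1 ≤ m)
    (P : Matrix (Fin N) (Fin N) ℝ) (π : Fin N → ℝ)
    (hP : IsMarkov P) (hreg : IsRegularMC P) (hπ : IsStationaryMC P π) :
    (∀ y : Fin N × Fin m → ℂ, memU π y →
      ((P.map Complex.ofReal) ⊗ₖ (1 : Matrix (Fin m) (Fin m) ℂ))ᵀ *ᵥ y = y) ∧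
    (∀ y : Fin N × Fin m → ℂ, perpU π y →
      perpU π (((P.map Complex.ofReal) ⊗ₖ (1 : Matrix (Fin m) (Fin m) ℂ))ᵀ *ᵥ y) ∧
      piNormKron π (((P.map Complex.ofReal) ⊗ₖ (1 : Matrix (Fin m) (Fin m) ℂ))ᵀ *ᵥ y) ≤
        specExp P π * piNormKron π y) :=
  stmt_11_general P π hP hπ
end
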